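/- (Theorem 2) Fix N ≥ 1 and d ≥ 2, and let M = d. Let Φ_1, …, Φ_d be unit vectors indexed by (Fin N → Fin d) such that for every k and every subsystem j : Fin N the one-qudit reduced density matrix of |Φ_k⟩⟨Φ_k| at site j equals (1/d)·I_d, and let λ_1, …, λ_d > 0 with ∑_k λ_k = 1. If it is NOT the case that both λ_k = 1/d for all k and the Φ_k are pairwise orthogonal, then the mixed state ρ = ∑_k λ_k |Φ_k⟩⟨Φ_k| is entangled, i.e. not fully separable. -/

import Mathlib

open scoped ComplexOrder

noncomputable section

/-- Extend an assignment `g` on the indices other than `j` by the value `x` at position `j`. -/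
def insertAt {N d : ℕ} (j : Fin N) (x : Fin d) (g : {i : Fin N // i ≠ j} → Fin d) :
    Fin N → Fin d :=
  fun i => if h : i = j then x else g ⟨i, h⟩

/-- The one-qudit reduced density matrix at site `j`. -/
def reduced {N d : ℕ} (ρ : Matrix (Fin N → Fin d) (Fin N → Fin d) ℂ) (j : Fin N) :
    Matrix (Fin d) (Fin d) ℂ :=
  Matrix.of fun x y => ∑ g : {i : Fin N // i ≠ j} → Fin d,
    ρ (insertAt j x g) (insertAt j y g)

/-- Full separability of an `N`-partite `d`-level state. -/
def FullySeparable {N d : ℕ} (ρ : Matrix (Fin N → Fin d) (Fin N → Fin d) ℂ) : Prop :=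
  ∃ (m : ℕ) (p : Fin m → ℝ) (σ : Fin m → Fin N → Matrix (Fin d) (Fin d) ℂ),
    (∀ i, 0 ≤ p i) ∧ (∑ i, p i = 1) ∧
    (∀ i k, (σ i k).PosSemidef ∧ (σ i k).trace = 1) ∧
    (∀ a b, ρ a b = ∑ i, (p i : ℂ) * ∏ k, σ i k (a k) (b k))

/-- The pure-state density matrix `|Φ⟩⟨Φ|`. -/
def pureMat {α : Type*} (Φ : α → ℂ) : Matrix α α ℂ :=
  Matrix.of fun a b => Φ a * (starRingEnd ℂ) (Φ b)

/-! Compare purities `Tr ρ²`. For a fully separable `ρ = ∑ᵢ pᵢ ⨂ₖ σᵢᵏ`,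
`Tr ρ² = ∑ pᵢ pᵢ' ∏ₖ Tr (σᵢᵏ σᵢ'ᵏ)`, and every factor lies in `[0, 1]` because
`Tr (AB) ≤ Tr A · Tr B` for positive semidefinite `A`, `B`; dropping all factors but the one at a
site `j` bounds `Tr ρ²` by the purity `Tr ρⱼ²` of the one-qudit marginal. For the mixture, the
marginal is `I/d`, of purity `1/d`, whereas `Tr ρ² = ∑ λₖ λₗ |⟨Φₖ, Φₗ⟩|² ≥ ∑ λₖ² ≥ 1/d`, with
equality only for uniform weights and pairwise orthogonal states. -/

open Matrix

lemma Fintype.prod_le_apply_of_le_one {ι R : Type*} [Fintype ι] [DecidableEq ι] [CommSemiring R]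
    [PartialOrder R] [IsOrderedRing R] {t : ι → R} (h0 : ∀ k, 0 ≤ t k) (h1 : ∀ k, t k ≤ 1)
    (j : ι) : ∏ k, t k ≤ t j := by
  rw [Fintype.prod_eq_mul_prod_subtype_ne _ j]
  exact mul_le_of_le_one_right (h0 j) (Finset.prod_le_one (fun k _ => h0 k) fun k _ => h1 k)

lemma sum_sq_sub_inv_card {ι : Type*} [Fintype ι] {w : ι → ℝ} (hw : ∑ i, w i = 1) :
    ∑ i, (w i - (Fintype.card ι : ℝ)⁻¹) ^ 2 = ∑ i, w i ^ 2 - (Fintype.card ι : ℝ)⁻¹ := by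
  simp only [sub_sq, Finset.sum_add_distrib, Finset.sum_sub_distrib, ← Finset.sum_mul,
    ← Finset.mul_sum, hw, Finset.sum_const, Finset.card_univ, nsmul_eq_mul]
  have hcard : (Fintype.card ι : ℝ) * (Fintype.card ι : ℝ)⁻¹ ^ 2 = (Fintype.card ι : ℝ)⁻¹ := by
    simpa [sq, mul_assoc] using inv_mul_mul_self (Fintype.card ι : ℝ)⁻¹
  rw [hcard]
  ring

lemma sum_mul_mul_eq_sum_sq_add_sum_erase {ι : Type*} [Fintype ι] [DecidableEq ι] (w : ι → ℝ)
    {c : ι → ι → ℝ} (hc : ∀ i, c i i = 1) :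
    ∑ i, ∑ j, w i * w j * c i j =
      ∑ i, w i ^ 2 + ∑ i, ∑ j ∈ Finset.univ.erase i, w i * w j * c i j := by
  rw [← Finset.sum_add_distrib]
  refine Finset.sum_congr rfl fun i _ => ?_
  rw [← Finset.add_sum_erase _ _ (Finset.mem_univ i), hc, mul_one, sq]

lemma eq_inv_card_and_eq_zero_of_sum_mul_mul_le {ι : Type*} [Fintype ι] {w : ι → ℝ}
    (hw0 : ∀ i, 0 < w i) (hw1 : ∑ i, w i = 1) {c : ι → ι → ℝ} (hc0 : ∀ i j, 0 ≤ c i j)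
    (hc1 : ∀ i, c i i = 1) (h : ∑ i, ∑ j, w i * w j * c i j ≤ (Fintype.card ι : ℝ)⁻¹) :
    (∀ i, w i = (Fintype.card ι : ℝ)⁻¹) ∧ ∀ i j, i ≠ j → c i j = 0 := by
  classical
  have hterm : ∀ i j, 0 ≤ w i * w j * c i j := fun i j =>
    mul_nonneg (mul_pos (hw0 i) (hw0 j)).le (hc0 i j)
  have hdev : 0 ≤ ∑ i, (w i - (Fintype.card ι : ℝ)⁻¹) ^ 2 :=
    Finset.sum_nonneg fun i _ => sq_nonneg _
  have hoff : 0 ≤ ∑ i, ∑ j ∈ Finset.univ.erase i, w i * w j * c i j :=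
    Finset.sum_nonneg fun i _ => Finset.sum_nonneg fun j _ => hterm i j
  rw [sum_mul_mul_eq_sum_sq_add_sum_erase w hc1, ← sub_nonpos, add_sub_right_comm,
    ← sum_sq_sub_inv_card hw1] at h
  obtain ⟨hdev0, hoff0⟩ :=
    (add_eq_zero_iff_of_nonneg hdev hoff).mp (le_antisymm h (add_nonneg hdev hoff))
  refine ⟨fun i => ?_, fun i j hij => ?_⟩
  · have hi := (Finset.sum_eq_zero_iff_of_nonneg fun i _ => sq_nonneg _).mp hdev0 i
      (Finset.mem_univ i)
    exact sub_eq_zero.mp (pow_eq_zero_iff two_ne_zero |>.mp hi)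
  · have hi := (Finset.sum_eq_zero_iff_of_nonneg fun i _ =>
      Finset.sum_nonneg fun j _ => hterm i j).mp hoff0 i (Finset.mem_univ i)
    have hij := (Finset.sum_eq_zero_iff_of_nonneg fun j _ => hterm i j).mp hi j
      (Finset.mem_erase.mpr ⟨hij.symm, Finset.mem_univ j⟩)
    exact (mul_eq_zero.mp hij).resolve_left (mul_pos (hw0 i) (hw0 j)).ne'

lemma trace_sum_smul_mul_sum_smul {ι n S R : Type*} [Fintype ι] [Fintype n] [CommSemiring S]
    [CommSemiring R] [Algebra S R] (w : ι → S) (A : ι → Matrix n n R) :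
    ((∑ i, w i • A i) * ∑ i, w i • A i : Matrix n n R).trace =
      ∑ i, ∑ i', (w i * w i') • (A i * A i').trace := by
  simp only [Finset.sum_mul_sum, trace_sum, smul_mul_assoc, mul_smul_comm, trace_smul, smul_smul]
  exact Finset.sum_congr rfl fun i _ => Finset.sum_congr rfl fun i' _ => by rw [mul_comm]

namespace Matrix

variable {m n 𝕜 : Type*} [Fintype m] [Fintype n] [RCLike 𝕜]

open scoped Matrix.Norms.Frobenius in
lemma trace_conjTranspose_mul_self_eq_frobenius_norm_sq (X : Matrix m n 𝕜) :
    (Xᴴ * X).trace = ((‖X‖ ^ 2 : ℝ) : 𝕜) := by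
  rw [frobenius_norm_def, ← Real.sqrt_eq_rpow, Real.sq_sqrt (by positivity)]
  simp only [Real.rpow_two, trace, diag_apply, mul_apply, conjTranspose_apply, RCLike.star_def,
    RCLike.conj_mul, RCLike.ofReal_sum, RCLike.ofReal_pow]
  exact Finset.sum_comm

lemma PosSemidef.exists_eq_conjTranspose_mul_self {A : Matrix n n 𝕜} (hA : A.PosSemidef) :
    ∃ X : Matrix n n 𝕜, A = Xᴴ * X := by
  classical
  open scoped MatrixOrder in
  exact CStarAlgebra.nonneg_iff_eq_star_mul_self.mp hA.nonneg

lemma trace_conjTranspose_mul_self_mul_conjTranspose_mul_self (X Y : Matrix n n 𝕜) :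
    (Xᴴ * X * (Yᴴ * Y)).trace = ((X * Yᴴ)ᴴ * (X * Yᴴ)).trace := by
  rw [conjTranspose_mul, conjTranspose_conjTranspose, ← Matrix.mul_assoc, trace_mul_comm]
  simp only [Matrix.mul_assoc]

lemma PosSemidef.trace_mul_nonneg {A B : Matrix n n 𝕜} (hA : A.PosSemidef) (hB : B.PosSemidef) :
    0 ≤ (A * B).trace := by
  obtain ⟨X, rfl⟩ := hA.exists_eq_conjTranspose_mul_self
  obtain ⟨Y, rfl⟩ := hB.exists_eq_conjTranspose_mul_self
  rw [trace_conjTranspose_mul_self_mul_conjTranspose_mul_self]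
  exact (posSemidef_conjTranspose_mul_self _).trace_nonneg

open scoped Matrix.Norms.Frobenius in
lemma PosSemidef.trace_mul_le_trace_mul_trace {A B : Matrix n n 𝕜}
    (hA : A.PosSemidef) (hB : B.PosSemidef) : (A * B).trace ≤ A.trace * B.trace := by
  obtain ⟨X, rfl⟩ := hA.exists_eq_conjTranspose_mul_self
  obtain ⟨Y, rfl⟩ := hB.exists_eq_conjTranspose_mul_self
  rw [trace_conjTranspose_mul_self_mul_conjTranspose_mul_self,
    trace_conjTranspose_mul_self_eq_frobenius_norm_sq,
    trace_conjTranspose_mul_self_eq_frobenius_norm_sq,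
    trace_conjTranspose_mul_self_eq_frobenius_norm_sq, ← RCLike.ofReal_mul,
    RCLike.ofReal_le_ofReal, ← mul_pow, ← frobenius_norm_conjTranspose Y]
  gcongr
  exact frobenius_norm_mul X Yᴴ

end Matrix

section PiKronecker

variable {ι κ R : Type*} [Fintype ι] [DecidableEq ι] [Fintype κ] [CommSemiring R]

def piKronecker (σ : ι → Matrix κ κ R) : Matrix (ι → κ) (ι → κ) R :=
  of fun a b => ∏ k, σ k (a k) (b k)

lemma piKronecker_mul (σ τ : ι → Matrix κ κ R) :
    piKronecker σ * piKronecker τ = piKronecker (σ * τ) := by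
  ext a c
  simp only [piKronecker, mul_apply, of_apply, Pi.mul_apply, Fintype.prod_sum,
    Finset.prod_mul_distrib]

lemma trace_piKronecker (σ : ι → Matrix κ κ R) : (piKronecker σ).trace = ∏ k, (σ k).trace := by
  simp only [trace, diag, piKronecker, of_apply, Fintype.prod_sum]

end PiKronecker

section Reduced

variable {N d : ℕ}

@[simp]
lemma insertAt_self (j : Fin N) (x : Fin d) (g : {i : Fin N // i ≠ j} → Fin d) :
    insertAt j x g j = x := by
  simp [insertAt]

@[simp]
lemma insertAt_of_ne (j : Fin N) (x : Fin d) (g : {i : Fin N // i ≠ j} → Fin d)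
    (k : {i : Fin N // i ≠ j}) : insertAt j x g k = g k := by
  simp [insertAt, k.2]

lemma reduced_smul {S : Type*} [Monoid S] [DistribMulAction S ℂ] (c : S)
    (ρ : Matrix (Fin N → Fin d) (Fin N → Fin d) ℂ) (j : Fin N) :
    reduced (c • ρ) j = c • reduced ρ j := by
  ext x y
  simp [reduced, Finset.smul_sum]

lemma reduced_sum {ι : Type*} (s : Finset ι) (ρ : ι → Matrix (Fin N → Fin d) (Fin N → Fin d) ℂ)
    (j : Fin N) : reduced (∑ i ∈ s, ρ i) j = ∑ i ∈ s, reduced (ρ i) j := by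
  ext x y
  simp only [reduced, Matrix.sum_apply, of_apply]
  exact Finset.sum_comm

lemma reduced_piKronecker (σ : Fin N → Matrix (Fin d) (Fin d) ℂ) (j : Fin N) :
    reduced (piKronecker σ) j = (∏ k : {i // i ≠ j}, (σ k).trace) • σ j := by
  ext x y
  simp only [reduced, piKronecker, of_apply, Fintype.prod_eq_mul_prod_subtype_ne _ j,
    insertAt_self, insertAt_of_ne, ← Finset.mul_sum, Matrix.smul_apply, smul_eq_mul, trace, diag,
    Fintype.prod_sum]
  ring

theorem FullySeparable.trace_mul_self_le_trace_reduced_mul_self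
    {ρ : Matrix (Fin N → Fin d) (Fin N → Fin d) ℂ} (hρ : FullySeparable ρ) (j : Fin N) :
    (ρ * ρ).trace ≤ (reduced ρ j * reduced ρ j).trace := by
  obtain ⟨m, p, σ, hp, -, hσ, hρ⟩ := hρ
  have hρ_eq : ρ = ∑ i, (p i : ℂ) • piKronecker (σ i) := by
    ext a b
    simp [hρ, piKronecker, Matrix.sum_apply]
  have hred : reduced ρ j = ∑ i, (p i : ℂ) • σ i j := by
    simp [hρ_eq, reduced_sum, reduced_smul, reduced_piKronecker, (hσ _ _).2]
  rw [hred, hρ_eq, trace_sum_smul_mul_sum_smul, trace_sum_smul_mul_sum_smul]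
  refine Finset.sum_le_sum fun i _ => Finset.sum_le_sum fun i' _ => ?_
  rw [piKronecker_mul, trace_piKronecker, smul_eq_mul, smul_eq_mul]
  have hpp : (0 : ℂ) ≤ p i * p i' := by exact_mod_cast mul_nonneg (hp i) (hp i')
  refine mul_le_mul_of_nonneg_left
    (Fintype.prod_le_apply_of_le_one (fun k => ?_) (fun k => ?_) j) hpp
  · exact (hσ i k).1.trace_mul_nonneg (hσ i' k).1
  · simpa [(hσ i k).2, (hσ i' k).2] using (hσ i k).1.trace_mul_le_trace_mul_trace (hσ i' k).1

end Reduced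

section PureStates

variable {α : Type*} [Fintype α]

lemma sum_conj_mul_self_eq_sum_norm_sq (φ : α → ℂ) :
    ∑ a, starRingEnd ℂ (φ a) * φ a = ((∑ a, ‖φ a‖ ^ 2 : ℝ) : ℂ) := by
  push_cast
  exact Finset.sum_congr rfl fun a _ => by rw [mul_comm, Complex.mul_conj']

lemma trace_pureMat_mul_pureMat (φ ψ : α → ℂ) :
    (pureMat φ * pureMat ψ).trace = ((‖∑ a, starRingEnd ℂ (φ a) * ψ a‖ ^ 2 : ℝ) : ℂ) := by
  rw [Complex.ofReal_pow, ← Complex.mul_conj', map_sum, Finset.sum_mul_sum]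
  simp only [trace, diag, mul_apply, pureMat, of_apply, map_mul, Complex.conj_conj]
  rw [Finset.sum_comm]
  exact Finset.sum_congr rfl fun a _ => Finset.sum_congr rfl fun b _ => by ring

lemma trace_mul_self_sum_smul_pureMat {ι : Type*} [Fintype ι] (w : ι → ℝ) (Φ : ι → α → ℂ) :
    ((∑ k, w k • pureMat (Φ k)) * ∑ k, w k • pureMat (Φ k)).trace =
      ((∑ k, ∑ l, w k * w l * ‖∑ a, starRingEnd ℂ (Φ k a) * Φ l a‖ ^ 2 : ℝ) : ℂ) := by
  simp only [trace_sum_smul_mul_sum_smul, trace_pureMat_mul_pureMat, Complex.real_smul]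
  push_cast
  rfl

end PureStates

theorem mixture_entangled_of_card_eq_dim_general
    (N d : ℕ) (hN : 1 ≤ N)
    (Φ : Fin d → (Fin N → Fin d) → ℂ)
    (hunit : ∀ k, ∑ a, ‖Φ k a‖ ^ 2 = 1)
    (hred : ∀ k, ∀ j : Fin N, reduced (pureMat (Φ k)) j = (d : ℂ)⁻¹ • 1)
    (lam : Fin d → ℝ) (h0 : ∀ k, 0 < lam k) (h1 : ∑ k, lam k = 1)
    (hnot : ¬ ((∀ k, lam k = 1 / (d : ℝ)) ∧
      (∀ k l, k ≠ l → ∑ a, (starRingEnd ℂ) (Φ k a) * Φ l a = 0))) :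
    ¬ FullySeparable (∑ k, lam k • pureMat (Φ k)) := by
  intro hsep
  set ρ := ∑ k, lam k • pureMat (Φ k)
  set j : Fin N := ⟨0, hN⟩
  have hmarginal : reduced ρ j = (d : ℂ)⁻¹ • 1 := by
    simp only [ρ, reduced_sum, reduced_smul, hred, ← Finset.sum_smul, h1, one_smul]
  have hmarginal_purity : (reduced ρ j * reduced ρ j).trace = (((d : ℝ)⁻¹ : ℝ) : ℂ) := by
    rw [hmarginal, smul_mul_smul_comm, Matrix.one_mul, trace_smul, trace_one, Fintype.card_fin,
      smul_eq_mul]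
    push_cast
    simpa using mul_self_mul_inv (d : ℂ)⁻¹
  have hle := hsep.trace_mul_self_le_trace_reduced_mul_self j
  rw [trace_mul_self_sum_smul_pureMat, hmarginal_purity, Complex.real_le_real] at hle
  obtain ⟨hunif, horth⟩ := eq_inv_card_and_eq_zero_of_sum_mul_mul_le h0 h1
    (c := fun k l => ‖∑ a, starRingEnd ℂ (Φ k a) * Φ l a‖ ^ 2) (fun k l => sq_nonneg _)
    (fun k => by simp [sum_conj_mul_self_eq_sum_norm_sq, hunit])
    (by simpa using hle)
  exact hnot ⟨fun k => by simpa using hunif k, fun k l hkl => by simpa using horth k l hkl⟩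

/-- Theorem 2 of the paper: mixing `M = d` entangled `N`-partite pure states with maximally
mixed one-qudit reduced density matrices and strictly positive weights yields an entangled
state, except possibly in the case where the weights are all equal to `1/d` and the states
are pairwise orthogonal. -/
theorem mixture_entangled_of_card_eq_dim
    (N d : ℕ) (hN : 1 ≤ N) (hd : 2 ≤ d)
    (Φ : Fin d → (Fin N → Fin d) → ℂ)
    (hunit : ∀ k, ∑ a, ‖Φ k a‖ ^ 2 = 1)
    (hred : ∀ k, ∀ j : Fin N, reduced (pureMat (Φ k)) j = (d : ℂ)⁻¹ • 1)
    (lam : Fin d → ℝ) (h0 : ∀ k, 0 < lam k) (h1 : ∑ k, lam k = 1)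
    (hnot : ¬ ((∀ k, lam k = 1 / (d : ℝ)) ∧
      (∀ k l, k ≠ l → ∑ a, (starRingEnd ℂ) (Φ k a) * Φ l a = 0))) :
    ¬ FullySeparable (∑ k, lam k • pureMat (Φ k)) :=
  mixture_entangled_of_card_eq_dim_general N d hN Φ hunit hred lam h0 h1 hnot
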